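/- Reversal invariance of knot BiEntropy: for s : Fin n → Bool, the reversed string s̄(i) = s(n-1-i) satisfies KTBiEn(s̄) = KTBiEn(s). -/

import Mathlib

noncomputable def H (p : ℝ) : ℝ := -p * Real.logb 2 p - (1 - p) * Real.logb 2 (1 - p)

def kd {n : ℕ} [NeZero n] (s : Fin n → Bool) : Fin n → Bool := fun i => xor (s i) (s (i + 1))

noncomputable def ones {n : ℕ} (s : Fin n → Bool) : ℕ :=
  (Finset.univ.filter (fun i => s i = true)).card

noncomputable def KTBiEn {n : ℕ} [NeZero n] (s : Fin n → Bool) : ℝ :=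
  (∑ k ∈ Finset.range (n - 1), H ((ones (kd^[k] s) : ℝ) / n) * Real.logb 2 (k + 2)) /
    (∑ k ∈ Finset.range (n - 1), Real.logb 2 (k + 2))

/-! Reversing a string commutes with the cyclic derivative up to a rotation, so the `k`-th
derivative of the reversed string is a permutation of the `k`-th derivative of `s`; hence every
weight `ones (kd^[k] s)` entering `KTBiEn` is unchanged. -/

lemma ones_comp_equiv {m n : ℕ} (s : Fin n → Bool) (e : Fin m ≃ Fin n) :
    ones (fun i => s (e i)) = ones s :=
  Finset.card_equiv e (by simp)

section
open Fin.NatCast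
variable {n : ℕ} [NeZero n]

lemma kd_comp_sub (s : Fin n → Bool) (c : Fin n) :
    kd (fun i => s (i - c)) = fun i => kd s (i - c) := by
  funext i
  simp only [kd, sub_add_eq_add_sub]

lemma kd_comp_rev (s : Fin n → Bool) : kd (fun i => s i.rev) = fun i => kd s (i.rev - 1) := by
  funext i
  simp only [kd, Fin.rev_add, sub_add_cancel, Bool.xor_comm]

lemma iterate_kd_comp_rev (s : Fin n → Bool) (k : ℕ) :
    kd^[k] (fun i => s i.rev) = fun i => kd^[k] s (i.rev - k) := by
  induction k with
  | zero => simp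
  | succ k ih =>
    rw [Function.iterate_succ_apply', Function.iterate_succ_apply', ih,
      kd_comp_rev (fun j => kd^[k] s (j - (k : Fin n))), kd_comp_sub]
    simp only [Nat.cast_succ, sub_sub, add_comm (1 : Fin n)]

lemma ones_iterate_kd_comp_rev (s : Fin n → Bool) (k : ℕ) :
    ones (kd^[k] (fun i => s i.rev)) = ones (kd^[k] s) := by
  rw [iterate_kd_comp_rev]
  exact ones_comp_equiv _ (Fin.revPerm.trans (Equiv.subRight (k : Fin n)))

end

theorem ktBiEn_rev (n : ℕ) [NeZero n] (s : Fin n → Bool) :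
    KTBiEn (fun i => s i.rev) = KTBiEn s := by
  simp only [KTBiEn, ones_iterate_kd_comp_rev]
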